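/- arXiv:1306.1841 — 3 statements merged into one kernel-verified Lean document; each statement's English description precedes it below -/
import Mathlib

section
/- (Cartan's lemma.) Let n ≥ 1, let ν be a finite nonnegative Borel measure on ℝⁿ with β := ν(ℝⁿ), and let ε > 0. Then there exists a set E_ε ⊆ ℝⁿ such that the one-dimensional Hausdorff content of E_ε satisfies H¹_∞(E_ε) < ε, and for every x ∉ E_ε and every r > 0, ν(B(x,r)) ≤ 10 r β / ε. -/
/-! Call `x` heavy if some ball `B(x, r)` has `ν`-mass above `r β / ρ`, with `ρ = ε / 10`;
the heavy points form `E_ε`. Heavy radii are at most `ρ`, so the Vitali covering lemma yields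
a disjoint family of heavy balls `B(b, r_b)` whose enlargements `B(b, 4 r_b)` cover `E_ε`.
Disjointness and heaviness give `Σ r_b β / ρ ≤ Σ ν(B(b, r_b)) ≤ β`, so the enlarged balls
have total diameter at most `8 ρ < ε`. -/

open MeasureTheory Metric Set
open scoped ENNReal

/-- `c_n := 2^{n-2} Γ(n/2) π^{n/2}`. -/
noncomputable def cN (n : ℕ) : ℝ :=
  (2 : ℝ) ^ ((n : ℝ) - 2) * Real.Gamma ((n : ℝ) / 2) * Real.pi ^ ((n : ℝ) / 2)

/-- Logarithmic potential `u(x) = (1/c_n) ∫ log(|y|/|x-y|) f(y) dy`. -/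
noncomputable def logPot (n : ℕ) (f : EuclideanSpace ℝ (Fin n) → ℝ)
    (x : EuclideanSpace ℝ (Fin n)) : ℝ :=
  (1 / cN n) * ∫ y, Real.log (‖y‖ / ‖x - y‖) * f y

/-- `ω` is an `A_p` weight with constant `K` (for `p > 1`):
for every ball `B`, `(⨍_B ω) · (⨍_B ω^{-1/(p-1)})^{p-1} ≤ K`. -/
def IsApWeight (n : ℕ) (p K : ℝ) (ω : EuclideanSpace ℝ (Fin n) → ℝ) : Prop :=
  ∀ (x : EuclideanSpace ℝ (Fin n)) (r : ℝ), 0 < r →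
    ((volume (ball x r)).toReal⁻¹ * ∫ y in ball x r, ω y) *
      ((volume (ball x r)).toReal⁻¹ *
        ∫ y in ball x r, (ω y) ^ (-(1 / (p - 1)) : ℝ)) ^ (p - 1) ≤ K

/-- `δ_ω(x,y) = (∫_{B_{xy}} ω)^{1/n}`, where `B_{xy}` is the closed ball with
center `(x+y)/2` and radius `|x-y|/2`. -/
noncomputable def deltaW (n : ℕ) (ω : EuclideanSpace ℝ (Fin n) → ℝ)
    (x y : EuclideanSpace ℝ (Fin n)) : ℝ :=
  (∫ z in closedBall (midpoint ℝ x y) (dist x y / 2), ω z) ^ ((1 : ℝ) / n)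

/-- `d_ω(x,y)`: infimum of `∫₀^L ω(γ(t))^{1/n} dt` over all `L ≥ 0` and all
1-Lipschitz curves `γ : [0,L] → ℝⁿ` joining `x` to `y` inside `B_{xy}`. -/
noncomputable def dW (n : ℕ) (ω : EuclideanSpace ℝ (Fin n) → ℝ)
    (x y : EuclideanSpace ℝ (Fin n)) : ℝ :=
  sInf {d : ℝ | ∃ (L : ℝ) (γ : ℝ → EuclideanSpace ℝ (Fin n)),
    0 ≤ L ∧ LipschitzOnWith 1 γ (Set.Icc 0 L) ∧ γ 0 = x ∧ γ L = y ∧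
    (∀ t ∈ Set.Icc 0 L, γ t ∈ closedBall (midpoint ℝ x y) (dist x y / 2)) ∧
    d = ∫ t in (0 : ℝ)..L, (ω (γ t)) ^ ((1 : ℝ) / n)}

/-- One-dimensional Hausdorff content: infimum of `Σᵢ diam Bᵢ` over countable
covers of `E` by balls `Bᵢ`. -/
noncomputable def H1content {n : ℕ} (E : Set (EuclideanSpace ℝ (Fin n))) : ℝ≥0∞ :=
  ⨅ (c : ℕ → EuclideanSpace ℝ (Fin n) × ℝ) (_ : E ⊆ ⋃ i, ball (c i).1 (c i).2),
    ∑' i, ENNReal.ofReal (2 * (c i).2)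

open ENNReal

section

variable {X : Type*} [MeasurableSpace X] {ν : Measure X}

theorem ofReal_mul_measure_univ_lt_of_lt [IsFiniteMeasure ν] {A : Set X} {r ρ : ℝ}
    (hρ : 0 < ρ) (h : ENNReal.ofReal (r * (ν univ).toReal / ρ) < ν A) :
    ENNReal.ofReal r * ν univ < ENNReal.ofReal ρ * ν A := by
  have hsplit : ENNReal.ofReal r * ν univ =
      ENNReal.ofReal ρ * ENNReal.ofReal (r * (ν univ).toReal / ρ) := by
    rw [← ofReal_mul hρ.le, mul_div_cancel₀ _ hρ.ne', ofReal_mul' toReal_nonneg,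
      ofReal_toReal (measure_ne_top ν univ)]
  rw [hsplit]
  exact ENNReal.mul_lt_mul_right (ofReal_pos.2 hρ).ne' ofReal_ne_top h

variable [MetricSpace X] [OpensMeasurableSpace X]

theorem tsum_ofReal_radius_le_of_pairwiseDisjoint [IsFiniteMeasure ν] {u : Set X}
    {r : X → ℝ} {ρ : ℝ} (hdisj : u.PairwiseDisjoint fun b => closedBall b (r b))
    (hheavy : ∀ b ∈ u,
      ENNReal.ofReal (r b) * ν univ < ENNReal.ofReal ρ * ν (closedBall b (r b))) :
    ∑' b : u, ENNReal.ofReal (r b) ≤ ENNReal.ofReal ρ := by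
  rcases u.eq_empty_or_nonempty with rfl | ⟨b, hb⟩
  · simp
  have hν : ν univ ≠ 0 := by
    intro h0
    simpa [h0] using
      (hheavy b hb).trans_le (mul_le_mul_right (measure_mono (subset_univ _)) _)
  refine (ENNReal.mul_le_mul_iff_left hν (measure_ne_top ν univ)).1 ?_
  calc (∑' b : u, ENNReal.ofReal (r b)) * ν univ
      = ∑' b : u, ENNReal.ofReal (r b) * ν univ := ENNReal.tsum_mul_right.symm
    _ ≤ ∑' b : u, ENNReal.ofReal ρ * ν (closedBall (b : X) (r b)) :=
        ENNReal.tsum_le_tsum fun b => (hheavy b b.2).le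
    _ = ENNReal.ofReal ρ * ∑' b : u, ν (closedBall (b : X) (r b)) := ENNReal.tsum_mul_left
    _ ≤ ENNReal.ofReal ρ * ν univ := by
        gcongr
        exact (tsum_meas_le_meas_iUnion_of_disjoint ν (fun _ => measurableSet_closedBall)
          hdisj.subtype).trans (measure_mono (subset_univ _))

theorem exists_countable_cover_of_lt_measure_ball [IsFiniteMeasure ν] {s : Set X}
    {r : X → ℝ} {ρ : ℝ} (hρ : 0 < ρ) (hr : ∀ x ∈ s, 0 < r x)
    (hs : ∀ x ∈ s, ENNReal.ofReal (r x * (ν univ).toReal / ρ) < ν (ball x (r x))) :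
    ∃ u : Set X, u.Countable ∧ s ⊆ ⋃ b : u, ball (b : X) (4 * r b) ∧
      ∑' b : u, ENNReal.ofReal (r b) ≤ ENNReal.ofReal ρ := by
  have hheavy : ∀ x ∈ s,
      ENNReal.ofReal (r x) * ν univ < ENNReal.ofReal ρ * ν (closedBall x (r x)) :=
    fun x hx => (ofReal_mul_measure_univ_lt_of_lt hρ (hs x hx)).trans_le
      (mul_le_mul_right (measure_mono ball_subset_closedBall) _)
  have hr_le : ∀ x ∈ s, r x ≤ ρ := fun x hx =>
    (ofReal_lt_ofReal_iff'.1 (lt_of_mul_lt_mul_right'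
      ((hheavy x hx).trans_le (mul_le_mul_right (measure_mono (subset_univ _)) _)))).1.le
  obtain ⟨u, hus, hdisj, hcov⟩ :=
    Vitali.exists_disjoint_subfamily_covering_enlargement_closedBall s id r ρ hr_le (7 / 2)
      (by norm_num)
  have hsum := tsum_ofReal_radius_le_of_pairwiseDisjoint hdisj fun b hb => hheavy b (hus hb)
  refine ⟨u, ?_, ?_, hsum⟩
  · have hsupp : (fun b : u => ENNReal.ofReal (r b)).support = univ :=
      eq_univ_of_forall fun b => (ofReal_pos.2 (hr b (hus b.2))).ne'
    have := Summable.countable_support_ennreal (ne_top_of_le_ne_top ofReal_ne_top hsum)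
    rw [hsupp, countable_univ_iff] at this
    exact countable_coe_iff.1 this
  · intro x hx
    obtain ⟨b, hb, hsub⟩ := hcov x hx
    exact mem_iUnion.2 ⟨⟨b, hb⟩, closedBall_subset_ball (by linarith [hr b (hus hb)])
      (hsub (mem_closedBall_self (hr x hx).le))⟩

end

theorem H1content_le_tsum_of_subset_iUnion_ball {n : ℕ} {ι : Type*} [Countable ι]
    {E : Set (EuclideanSpace ℝ (Fin n))} (c : ι → EuclideanSpace ℝ (Fin n)) (r : ι → ℝ)
    (hE : E ⊆ ⋃ i, ball (c i) (r i)) :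
    H1content E ≤ ∑' i, ENNReal.ofReal (2 * r i) := by
  obtain ⟨f, hf⟩ := Countable.exists_injective_nat ι
  let C : ℕ → EuclideanSpace ℝ (Fin n) × ℝ := Function.extend f (fun i => (c i, r i)) 0
  have hC : ∀ i, C (f i) = (c i, r i) := fun i => hf.extend_apply _ _ i
  have hcover : E ⊆ ⋃ m, ball (C m).1 (C m).2 := fun x hx => by
    obtain ⟨i, hi⟩ := mem_iUnion.1 (hE hx)
    exact mem_iUnion.2 ⟨f i, by simpa [hC] using hi⟩
  have hsupp : (fun m => ENNReal.ofReal (2 * (C m).2)).support ⊆ range f := by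
    intro m hm
    by_contra hmf
    simp [C, Function.extend_apply' _ _ _ fun h => hmf h] at hm
  calc H1content E ≤ ∑' m, ENNReal.ofReal (2 * (C m).2) := iInf₂_le C hcover
    _ = ∑' i, ENNReal.ofReal (2 * r i) := by
        rw [← hf.tsum_eq hsupp]
        simp only [hC]

theorem cartan_lemma_general
    (n : ℕ)
    (ν : Measure (EuclideanSpace ℝ (Fin n))) [IsFiniteMeasure ν]
    (ε : ℝ) (hε : 0 < ε) :
    ∃ Eε : Set (EuclideanSpace ℝ (Fin n)),
      H1content Eε < ENNReal.ofReal ε ∧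
      ∀ x ∉ Eε, ∀ r : ℝ, 0 < r →
        ν (ball x r) ≤ ENNReal.ofReal (10 * r * (ν Set.univ).toReal / ε) := by
  set E := {x | ∃ r, 0 < r ∧ ENNReal.ofReal (10 * r * (ν univ).toReal / ε) < ν (ball x r)}
  choose! r hr_pos hr_heavy using fun x (hx : x ∈ E) => hx
  have hs : ∀ x ∈ E, ENNReal.ofReal (r x * (ν univ).toReal / (ε / 10)) < ν (ball x (r x)) :=
    fun x hx => by
      convert hr_heavy x hx using 2
      field_simp
  obtain ⟨u, hu, hcover, hsum⟩ :=
    exists_countable_cover_of_lt_measure_ball (by positivity) hr_pos hs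
  have : Countable u := hu.to_subtype
  refine ⟨E, ?_, fun x hx ρ hρ => not_lt.1 fun h => hx ⟨ρ, hρ, h⟩⟩
  calc H1content E ≤ ∑' b : u, ENNReal.ofReal (2 * (4 * r b)) :=
        H1content_le_tsum_of_subset_iUnion_ball _ _ hcover
    _ = 8 * ∑' b : u, ENNReal.ofReal (r b) := by
        rw [← ENNReal.tsum_mul_left]
        refine tsum_congr fun b => ?_
        rw [← mul_assoc, ofReal_mul (by norm_num)]
        norm_num
    _ ≤ 8 * ENNReal.ofReal (ε / 10) := by gcongr
    _ < ENNReal.ofReal ε := by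
        rw [← ofReal_ofNat 8, ← ofReal_mul (by norm_num), ofReal_lt_ofReal_iff hε]
        linarith

/-- Cartan's lemma. For a finite nonnegative Borel measure `ν`
with total mass `β` and `ε > 0`, there is a set `E_ε` of one-dimensional Hausdorff
content `< ε` such that `ν(B(x,r)) ≤ 10 r β / ε` for all `x ∉ E_ε` and `r > 0`. -/
theorem cartan_lemma
    (n : ℕ) (hn : 1 ≤ n)
    (ν : Measure (EuclideanSpace ℝ (Fin n))) [IsFiniteMeasure ν]
    (ε : ℝ) (hε : 0 < ε) :
    ∃ Eε : Set (EuclideanSpace ℝ (Fin n)),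
      H1content Eε < ENNReal.ofReal ε ∧
      ∀ x ∉ Eε, ∀ r : ℝ, 0 < r →
        ν (ball x r) ≤ ENNReal.ofReal (10 * r * (ν Set.univ).toReal / ε) :=
  cartan_lemma_general n ν ε hε
end

section
/- For every integer n ≥ 2 there exists a constant C₀ > 0 depending only on n with the following property: for every finite nonnegative Borel measure ν on ℝⁿ with β := ν(ℝⁿ), every p₀ ∈ ℝⁿ, and every ε > 0, the set { x ∈ B(p₀,10) : (1/c_n) ∫_{B(p₀,10)} | log(1/|x−y|) | dν(y) > C₀ β / ε } has one-dimensional Hausdorff content strictly less than 10 ε. -/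
/-! If `ν (B(x, ρ)) ≤ K ρ` for all `ρ ≤ 1`, then the superlevel set `{y | log⁺ (1/|x - y|) > t}`
lies in `B(x, e^{-t})`, so the layer cake formula bounds `∫ log⁺ (1/|x - y|) dν(y)` by `K`; on
`B(p₀, 10)` the remaining part `log⁺ |x - y|` of `|log (1/|x - y|)|` is at most `20`. Hence, for
`K = 2β/ε`, every point of the singular set is the center of a ball with `ν (B(x, ρ)) > K ρ`.
The Vitali covering lemma selects disjoint such balls whose fivefold enlargements cover the set;
their total diameter is at most `10 β / K = 5 ε`. For `ε > 2` the ball `B(p₀, 10)` itself is a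
cover of total diameter `20 < 10 ε`. -/

open MeasureTheory Metric Set
open scoped ENNReal

open Real

lemma cN_pos {n : ℕ} (hn : 0 < n) : 0 < cN n := by
  have : 0 < Gamma ((n : ℝ) / 2) := Gamma_pos_of_pos (by positivity)
  unfold cN
  positivity

lemma abs_log_one_div_le {d : ℝ} (hd : 0 ≤ d) : |log (1 / d)| ≤ d + log⁺ (1 / d) := by
  have hlog : log (1 / d) = -log d := by rw [one_div, log_inv]
  refine abs_le.2 ⟨?_, ?_⟩
  · linarith [log_le_self hd, posLog_nonneg (x := 1 / d)]
  · linarith [le_max_right 0 (log (1 / d)), posLog_apply (x := 1 / d)]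

lemma twenty_mul_add_div_le_of_le_two {β ε : ℝ} (hβ : 0 ≤ β) (hε : 0 < ε) (hε₂ : ε ≤ 2) :
    2 * 10 * β + 2 * β / ε ≤ 42 * β / ε := by
  have : 20 * β ≤ 40 * β / ε := by rw [le_div_iff₀ hε]; nlinarith
  linarith [show 40 * β / ε + 2 * β / ε = 42 * β / ε by ring]

section LogPotential

variable {E : Type*} [NormedAddCommGroup E] {x : E}

lemma setOf_lt_posLog_one_div_norm_sub_subset {t : ℝ} (ht : 0 < t) :
    {y : E | t < log⁺ (1 / ‖x - y‖)} ⊆ closedBall x (exp (-t)) := by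
  intro y hy
  have ht_log : t < log (1 / ‖x - y‖) := (lt_max_iff.1 hy).resolve_left ht.not_gt
  have hpos : 0 < ‖x - y‖ := by
    by_contra! h
    rw [le_antisymm h (norm_nonneg _), div_zero, log_zero] at ht_log
    exact ht.not_gt ht_log
  rw [lt_log_iff_exp_lt (by positivity), lt_one_div (exp_pos t) hpos, one_div, ← exp_neg]
    at ht_log
  rw [mem_closedBall, dist_comm, dist_eq_norm]
  exact ht_log.le

variable [MeasurableSpace E] [OpensMeasurableSpace E] {ν : Measure E} {K : ℝ}

lemma lintegral_posLog_one_div_norm_sub_le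
    (hν : ∀ r, 0 < r → r ≤ 1 → ν (closedBall x r) ≤ ENNReal.ofReal (K * r)) :
    ∫⁻ y, ENNReal.ofReal (log⁺ (1 / ‖x - y‖)) ∂ν ≤ ENNReal.ofReal K := by
  rw [lintegral_eq_lintegral_meas_lt (f := fun y ↦ log⁺ (1 / ‖x - y‖)) ν
    (ae_of_all _ fun _ => posLog_nonneg) (continuous_posLog.measurable.comp
      ((continuous_const.sub continuous_id).norm.measurable.const_div 1)).aemeasurable]
  calc ∫⁻ t in Ioi 0, ν {y | t < log⁺ (1 / ‖x - y‖)}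
      ≤ ∫⁻ t in Ioi 0, ENNReal.ofReal K * ENNReal.ofReal (exp (-t)) :=
        setLIntegral_mono (by fun_prop) fun t ht =>
          (measure_mono (setOf_lt_posLog_one_div_norm_sub_subset ht)).trans <|
            (hν _ (exp_pos _) (exp_le_one_iff.2 (neg_nonpos.2 ht.le))).trans
              (ENNReal.ofReal_mul' (exp_pos _).le).le
    _ = ENNReal.ofReal K := by
        rw [lintegral_const_mul _ (by fun_prop), ← ofReal_integral_eq_lintegral_ofReal
          (integrableOn_exp_neg_Ioi 0) (ae_of_all _ fun t => (exp_pos _).le),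
          integral_exp_neg_Ioi_zero, ENNReal.ofReal_one, mul_one]

lemma setLIntegral_abs_log_one_div_norm_sub_le {S : Set E} (hS : MeasurableSet S) {R : ℝ}
    (hR : ∀ y ∈ S, ‖x - y‖ ≤ R)
    (hν : ∀ r, 0 < r → r ≤ 1 → ν (closedBall x r) ≤ ENNReal.ofReal (K * r)) :
    ∫⁻ y in S, ENNReal.ofReal |log (1 / ‖x - y‖)| ∂ν ≤
      ENNReal.ofReal R * ν S + ENNReal.ofReal K :=
  calc ∫⁻ y in S, ENNReal.ofReal |log (1 / ‖x - y‖)| ∂ν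
      ≤ ∫⁻ y in S, (ENNReal.ofReal R + ENNReal.ofReal (log⁺ (1 / ‖x - y‖))) ∂ν :=
        setLIntegral_mono' hS fun y hy => (ENNReal.ofReal_le_ofReal
          ((abs_log_one_div_le (norm_nonneg _)).trans (by linarith [hR y hy]))).trans
            ENNReal.ofReal_add_le
    _ = ENNReal.ofReal R * ν S + ∫⁻ y in S, ENNReal.ofReal (log⁺ (1 / ‖x - y‖)) ∂ν := by
        rw [lintegral_add_left measurable_const, setLIntegral_const]
    _ ≤ ENNReal.ofReal R * ν S + ENNReal.ofReal K := by
        gcongr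
        exact (setLIntegral_le_lintegral _ _).trans (lintegral_posLog_one_div_norm_sub_le hν)

lemma exists_lt_measure_closedBall_of_lt_setLIntegral {p : E} {r : ℝ} (hx : x ∈ ball p r)
    (hlarge : ENNReal.ofReal (2 * r) * ν univ + ENNReal.ofReal K <
      ∫⁻ y in ball p r, ENNReal.ofReal |log (1 / ‖x - y‖)| ∂ν) :
    ∃ ρ > 0, ENNReal.ofReal (K * ρ) < ν (closedBall x ρ) := by
  by_contra! hlight
  have hdist : ∀ y ∈ ball p r, ‖x - y‖ ≤ 2 * r := fun y hy => by
    rw [← dist_eq_norm]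
    linarith [dist_triangle_right x y p, mem_ball.1 hx, mem_ball.1 hy]
  refine hlarge.not_ge ((setLIntegral_abs_log_one_div_norm_sub_le measurableSet_ball hdist
    fun ρ hρ _ => hlight ρ hρ).trans ?_)
  gcongr
  exact subset_univ _

end LogPotential

section Content

variable {n : ℕ}

lemma H1content_le_tsum {ι : Type*} [Countable ι] {E : Set (EuclideanSpace ℝ (Fin n))}
    (c : ι → EuclideanSpace ℝ (Fin n) × ℝ) (hE : E ⊆ ⋃ i, ball (c i).1 (c i).2) :
    H1content E ≤ ∑' i, ENNReal.ofReal (2 * (c i).2) := by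
  classical
  have := Encodable.ofCountable ι
  set c' : ℕ → EuclideanSpace ℝ (Fin n) × ℝ :=
    Function.extend Encodable.encode c fun _ => (0, 0)
  have hc' : ∀ i, c' (Encodable.encode i) = c i := fun i =>
    (Encodable.encode_injective (α := ι)).extend_apply _ _ _
  refine (iInf₂_le c' ?_).trans_eq ?_
  · refine hE.trans (iUnion_subset fun i => ?_)
    rw [← hc' i]
    exact subset_iUnion (fun k => ball (c' k).1 (c' k).2) _
  · rw [← (Encodable.encode_injective (α := ι)).tsum_eq
      (f := fun k => ENNReal.ofReal (2 * (c' k).2))]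
    · simp only [hc']
    · intro k hk
      by_contra hk_range
      exact hk (by simp [c', Function.extend_apply' _ _ _ hk_range])

lemma H1content_mono {E F : Set (EuclideanSpace ℝ (Fin n))} (h : E ⊆ F) :
    H1content E ≤ H1content F :=
  iInf₂_mono' fun c hF => ⟨c, h.trans hF, le_rfl⟩

lemma H1content_le_of_subset_ball {E : Set (EuclideanSpace ℝ (Fin n))}
    {x : EuclideanSpace ℝ (Fin n)} {r : ℝ} (hE : E ⊆ ball x r) :
    H1content E ≤ ENNReal.ofReal (2 * r) := by
  simpa using H1content_le_tsum (fun _ : Unit => (x, r)) (by rwa [iUnion_const])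

lemma H1content_le_of_forall_exists_lt_measure_closedBall
    (ν : Measure (EuclideanSpace ℝ (Fin n))) [IsFiniteMeasure ν]
    {E : Set (EuclideanSpace ℝ (Fin n))} {K : ℝ} (hK : 0 < K)
    (hE : ∀ x ∈ E, ∃ ρ > 0, ENNReal.ofReal (K * ρ) < ν (closedBall x ρ)) :
    H1content E ≤ ENNReal.ofReal (10 / K) * ν univ := by
  choose! ρ hρ_pos hρ_heavy using hE
  have hρ_le : ∀ x ∈ E, ρ x ≤ (ν univ).toReal / K := fun x hx => by
    rw [le_div_iff₀ hK, mul_comm, ← ENNReal.ofReal_le_ofReal_iff ENNReal.toReal_nonneg,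
      ENNReal.ofReal_toReal (measure_ne_top ν _)]
    exact (hρ_heavy x hx).le.trans (measure_mono (subset_univ _))
  obtain ⟨u, huE, hu_disj, hu_cover⟩ :=
    Vitali.exists_disjoint_subfamily_covering_enlargement_closedBall E id ρ _ hρ_le 4
      (by norm_num)
  have hu_countable : u.Countable := hu_disj.countable_of_nonempty_interior fun x hx =>
    (nonempty_ball.2 (hρ_pos x (huE hx))).mono ball_subset_interior_closedBall
  have : Countable u := hu_countable.to_subtype
  have hcover : E ⊆ ⋃ b : u, ball (b : EuclideanSpace ℝ (Fin n)) (5 * ρ b) := by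
    intro x hx
    obtain ⟨b, hbu, hb⟩ := hu_cover x hx
    have hxb : dist x b ≤ 4 * ρ b := hb (mem_closedBall_self (hρ_pos x hx).le)
    exact mem_iUnion.2 ⟨⟨b, hbu⟩, by
      simpa using hxb.trans_lt (by linarith [hρ_pos b (huE hbu)])⟩
  calc H1content E ≤ ∑' b : u, ENNReal.ofReal (2 * (5 * ρ b)) :=
        H1content_le_tsum (fun b : u => ((b : EuclideanSpace ℝ (Fin n)), 5 * ρ b)) hcover
    _ ≤ ∑' b : u, ENNReal.ofReal (10 / K) * ν (closedBall b (ρ b)) := by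
        refine ENNReal.tsum_le_tsum fun b => ?_
        calc ENNReal.ofReal (2 * (5 * ρ b))
            = ENNReal.ofReal (10 / K) * ENNReal.ofReal (K * ρ b) := by
              rw [← ENNReal.ofReal_mul (by positivity)]
              congr 1
              field_simp
              ring
          _ ≤ _ := by gcongr; exact (hρ_heavy b (huE b.2)).le
    _ = ENNReal.ofReal (10 / K) * ν (⋃ b ∈ u, closedBall b (ρ b)) := by
        rw [ENNReal.tsum_mul_left]
        congr 1
        exact (measure_biUnion hu_countable hu_disj fun _ _ => measurableSet_closedBall).symm
    _ ≤ ENNReal.ofReal (10 / K) * ν univ := by gcongr; exact subset_univ _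

lemma H1content_setOf_lt_setLIntegral_abs_log_le (ν : Measure (EuclideanSpace ℝ (Fin n)))
    [IsFiniteMeasure ν] (p : EuclideanSpace ℝ (Fin n)) (r : ℝ) {K : ℝ} (hK : 0 < K) :
    H1content {x | x ∈ ball p r ∧ ENNReal.ofReal (2 * r) * ν univ + ENNReal.ofReal K <
      ∫⁻ y in ball p r, ENNReal.ofReal |log (1 / ‖x - y‖)| ∂ν} ≤
      ENNReal.ofReal (10 / K) * ν univ :=
  H1content_le_of_forall_exists_lt_measure_closedBall ν hK fun _ hx =>
    exists_lt_measure_closedBall_of_lt_setLIntegral hx.1 hx.2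

end Content

/-- There is `C₀ = C₀(n) > 0` such that for every finite
nonnegative Borel measure `ν` with total mass `β`, every `p₀` and every `ε > 0`,
the set of `x ∈ B(p₀,10)` where `(1/c_n) ∫_{B(p₀,10)} |log(1/|x-y|)| dν(y) > C₀ β/ε`
has one-dimensional Hausdorff content `< 10 ε`. -/
theorem content_of_singular_set_lt
    (n : ℕ) (hn : 2 ≤ n) :
    ∃ C₀ : ℝ, 0 < C₀ ∧
      ∀ (ν : Measure (EuclideanSpace ℝ (Fin n))), IsFiniteMeasure ν →
        ∀ (p₀ : EuclideanSpace ℝ (Fin n)) (ε : ℝ), 0 < ε →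
          H1content {x : EuclideanSpace ℝ (Fin n) | x ∈ ball p₀ 10 ∧
              ENNReal.ofReal (C₀ * (ν Set.univ).toReal / ε) <
                ENNReal.ofReal (1 / cN n) *
                  ∫⁻ y in ball p₀ 10, ENNReal.ofReal |Real.log (1 / ‖x - y‖)| ∂ν} <
            ENNReal.ofReal (10 * ε) := by
  have hc : 0 < cN n := cN_pos (by omega)
  refine ⟨42 / cN n, by positivity, fun ν _ p₀ ε hε => ?_⟩
  rcases lt_or_ge 2 ε with hε_large | hε_small
  · exact (H1content_le_of_subset_ball fun x hx => hx.1).trans_lt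
      ((ENNReal.ofReal_lt_ofReal_iff (by positivity)).2 (by linarith))
  rcases eq_or_ne ν 0 with rfl | hν
  · refine (H1content_le_of_subset_ball (x := p₀) (r := 0) fun x hx => ?_).trans_lt
      (by simpa using hε)
    simp at hx
  set β := (ν univ).toReal
  have hν_univ : ν univ = ENNReal.ofReal β := (ENNReal.ofReal_toReal (measure_ne_top ν _)).symm
  have hβ : 0 < β := ENNReal.toReal_pos (Measure.measure_univ_ne_zero.2 hν) (measure_ne_top ν _)
  have hthreshold : ENNReal.ofReal (1 / cN n) *
      (ENNReal.ofReal (2 * 10) * ν univ + ENNReal.ofReal (2 * β / ε)) ≤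
      ENNReal.ofReal (42 / cN n * β / ε) := by
    rw [hν_univ, ← ENNReal.ofReal_mul (by norm_num), ← ENNReal.ofReal_add (by positivity)
      (by positivity), ← ENNReal.ofReal_mul (by positivity)]
    exact ENNReal.ofReal_le_ofReal <| (mul_le_mul_of_nonneg_left
      (twenty_mul_add_div_le_of_le_two hβ.le hε hε_small) (by positivity)).trans_eq (by ring)
  refine lt_of_le_of_lt (H1content_mono ?_)
    ((H1content_setOf_lt_setLIntegral_abs_log_le ν p₀ 10 (K := 2 * β / ε)
      (by positivity)).trans_lt ?_)
  · exact fun x hx => ⟨hx.1, lt_of_mul_lt_mul_left' (hthreshold.trans_lt hx.2)⟩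
  rw [hν_univ, ← ENNReal.ofReal_mul (by positivity)]
  refine (ENNReal.ofReal_lt_ofReal_iff (by positivity)).2 ?_
  have : 10 / (2 * β / ε) * β = 5 * ε := by field_simp; ring
  linarith
end

section
/- Let n ≥ 1, let x, y ∈ ℝⁿ with |x−y| = 2, let L ≥ 0 and let γ : [0,L] → ℝⁿ be a 1-Lipschitz curve with γ(0) = x and γ(L) = y. Let 0 < ε ≤ 1/20 and let E ⊆ ℝⁿ be a set whose one-dimensional Hausdorff content satisfies H¹_∞(E) < 10 ε. Then the Lebesgue measure of the set { t ∈ [0,L] : γ(t) ∉ E } is strictly greater than 3/2. -/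
open MeasureTheory Metric Set
open scoped ENNReal

/-! The 1-Lipschitz function `π = dist x` sends `γ` to a 1-Lipschitz function on `[0, L]` that
runs from `0` to `2`, so by the intermediate value theorem its image covers `[0, 2]`. The times
with `γ t ∈ E` contribute at most `|π(E)| ≤ H¹_∞(E) < 1/2` to this cover, because `π` maps a
ball into an interval of the same diameter; the other times contribute at most their own measure,
because 1-Lipschitz maps of `ℝ` do not increase Lebesgue measure. -/

lemma LipschitzOnWith.volume_image_le {f : ℝ → ℝ} {s : Set ℝ} (hf : LipschitzOnWith 1 f s) :
    volume (f '' s) ≤ volume s := by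
  simpa [hausdorffMeasure_real] using hf.hausdorffMeasure_image_le (d := 1) zero_le_one

lemma LipschitzOnWith.ofReal_sub_le_volume_diff_add_volume_image_inter {f : ℝ → ℝ} {a b : ℝ}
    (hf : LipschitzOnWith 1 f (Icc a b)) (hab : a ≤ b) (s : Set ℝ) :
    ENNReal.ofReal (f b - f a) ≤ volume (Icc a b \ s) + volume (f '' (Icc a b ∩ s)) := by
  have hcover : Icc (f a) (f b) ⊆ f '' (Icc a b \ s) ∪ f '' (Icc a b ∩ s) := by
    rw [← image_union, sdiff_union_inter]
    exact intermediate_value_Icc hab hf.continuousOn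
  calc ENNReal.ofReal (f b - f a) = volume (Icc (f a) (f b)) := Real.volume_Icc.symm
    _ ≤ volume (f '' (Icc a b \ s)) + volume (f '' (Icc a b ∩ s)) :=
        (measure_mono hcover).trans (measure_union_le _ _)
    _ ≤ volume (Icc a b \ s) + volume (f '' (Icc a b ∩ s)) :=
        add_le_add_left (hf.mono sdiff_subset).volume_image_le _

lemma volume_image_le_H1content {n : ℕ} {π : EuclideanSpace ℝ (Fin n) → ℝ}
    (hπ : LipschitzWith 1 π) (E : Set (EuclideanSpace ℝ (Fin n))) :
    volume (π '' E) ≤ H1content E := by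
  refine le_iInf₂ fun c hc => ?_
  have hcover : π '' E ⊆ ⋃ i, ball (π (c i).1) (c i).2 := by
    rw [image_subset_iff, preimage_iUnion]
    refine hc.trans (iUnion_mono fun i => ?_)
    exact fun z hz => by simpa using hπ.mapsTo_ball one_ne_zero _ _ hz
  calc volume (π '' E) ≤ ∑' i, volume (ball (π (c i).1) (c i).2) :=
        (measure_mono hcover).trans (measure_iUnion_le _)
    _ = ∑' i, ENNReal.ofReal (2 * (c i).2) := by simp only [Real.volume_ball]

theorem arclength_outside_small_content_set_general
    (n : ℕ)
    (x y : EuclideanSpace ℝ (Fin n)) (hxy : dist x y = 2)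
    (L : ℝ) (hL : 0 ≤ L) (γ : ℝ → EuclideanSpace ℝ (Fin n))
    (hγ : LipschitzOnWith 1 γ (Set.Icc 0 L)) (hγ0 : γ 0 = x) (hγL : γ L = y)
    (ε : ℝ) (hε : ε ≤ 1 / 20)
    (E : Set (EuclideanSpace ℝ (Fin n)))
    (hE : H1content E < ENNReal.ofReal (10 * ε)) :
    ENNReal.ofReal (3 / 2) < volume {t : ℝ | t ∈ Set.Icc 0 L ∧ γ t ∉ E} := by
  set π := dist x
  have hπ : LipschitzWith 1 π := LipschitzWith.dist_right x
  have hπγ : LipschitzOnWith 1 (π ∘ γ) (Icc 0 L) := by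
    simpa using hπ.comp_lipschitzOnWith hγ
  have hbad : (π ∘ γ) '' (Icc 0 L ∩ γ ⁻¹' E) ⊆ π '' E := by
    rw [image_comp]
    exact image_mono (image_subset_iff.2 inter_subset_right)
  have hsmall : volume (π '' E) < ENNReal.ofReal (1 / 2) :=
    ((volume_image_le_H1content hπ E).trans_lt hE).trans_le
      (ENNReal.ofReal_le_ofReal (by linarith))
  have hcover : ENNReal.ofReal 2 ≤
      volume {t : ℝ | t ∈ Set.Icc 0 L ∧ γ t ∉ E} + volume (π '' E) := by
    have := hπγ.ofReal_sub_le_volume_diff_add_volume_image_inter hL (γ ⁻¹' E)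
    simp only [Function.comp_apply, hγ0, hγL, π, dist_self, sub_zero, hxy] at this
    exact this.trans (add_le_add_right (measure_mono hbad) _)
  refine lt_of_add_lt_add_right (a := volume (π '' E)) ?_
  calc ENNReal.ofReal (3 / 2) + volume (π '' E)
      < ENNReal.ofReal (3 / 2) + ENNReal.ofReal (1 / 2) :=
        ENNReal.add_lt_add_left ENNReal.ofReal_ne_top hsmall
    _ = ENNReal.ofReal 2 := by rw [← ENNReal.ofReal_add] <;> norm_num
    _ ≤ _ := hcover

/-- arc-length estimate. If `|x-y| = 2`, `γ : [0,L] → ℝⁿ` is a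
1-Lipschitz curve from `x` to `y`, `0 < ε ≤ 1/20`, and `E` has one-dimensional
Hausdorff content `< 10 ε`, then the Lebesgue measure of
`{t ∈ [0,L] : γ(t) ∉ E}` is strictly greater than `3/2`. -/
theorem arclength_outside_small_content_set
    (n : ℕ) (hn : 1 ≤ n)
    (x y : EuclideanSpace ℝ (Fin n)) (hxy : dist x y = 2)
    (L : ℝ) (hL : 0 ≤ L) (γ : ℝ → EuclideanSpace ℝ (Fin n))
    (hγ : LipschitzOnWith 1 γ (Set.Icc 0 L)) (hγ0 : γ 0 = x) (hγL : γ L = y)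
    (ε : ℝ) (hε0 : 0 < ε) (hε : ε ≤ 1 / 20)
    (E : Set (EuclideanSpace ℝ (Fin n)))
    (hE : H1content E < ENNReal.ofReal (10 * ε)) :
    ENNReal.ofReal (3 / 2) < volume {t : ℝ | t ∈ Set.Icc 0 L ∧ γ t ∉ E} :=
  arclength_outside_small_content_set_general n x y hxy L hL γ hγ hγ0 hγL ε hε E hE
end
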